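/- If w = u v^ω is an ultimately periodic word over Σ = I × I whose letters are all among {(−,+), (+,−)}, then w ∈ L_ss: if v contains strictly more (+,−) than (−,+) then π₁(w) has a safe suffix; if strictly more (−,+) then π₂(w) has a safe suffix; if equal numbers then both components have safe suffixes. -/

import Mathlib

/-- The alphabet `I = {0, +, -}`. -/
inductive I : Type
  | zero | plus | minus
deriving DecidableEq, Inhabited

/-- Value of a single letter. -/
def lv : I → ℤ
  | I.zero => 0
  | I.plus => 1
  | I.minus => -1

/-- Energy level of a finite word. -/
def EL (v : List I) : ℤ := (v.map lv).sum

/-- The prefix `w(0) ⋯ w(n-1)` of an infinite word, of length `n`. -/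
def prefixWord (w : ℕ → I) (n : ℕ) : List I := (List.range n).map w

/-- `w` is safe if every nonempty prefix has nonnegative energy level. -/
def Safe (w : ℕ → I) : Prop := ∀ n : ℕ, 0 ≤ EL (prefixWord w (n + 1))

/-- `w` has a safe suffix. -/
def HasSafeSuffix (w : ℕ → I) : Prop := ∃ n : ℕ, Safe (fun k => w (n + k))

/-- The ultimately periodic word `u · v^ω` over `Σ = I × I`. -/
def upvw (u v : List (I × I)) : ℕ → I × I := fun n =>
  if n < u.length then u.getD n default
  else v.getD ((n - u.length) % v.length) default

/-!
Projected to either component, each letter `(−,+)` or `(+,−)` of `v` contributes `±1`, so the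
period of one of the two components has nonnegative energy, `count (+,−) - count (−,+)` for the
first and its negative for the second. A periodic word whose period has nonnegative energy has a
safe suffix: along it the prefix energies never drop below their minimum over the first period,
and the suffix starting at a position where that minimum is attained is safe.
-/

open Function

lemma EL_append (a b : List I) : EL (a ++ b) = EL a + EL b := by
  simp [EL]

lemma prefixWord_add (w : ℕ → I) (a b : ℕ) :
    prefixWord w (a + b) = prefixWord w a ++ prefixWord (fun k => w (a + k)) b := by
  simp [prefixWord, List.range_add]

lemma EL_prefixWord_add (w : ℕ → I) (a b : ℕ) :
    EL (prefixWord w (a + b)) = EL (prefixWord w a) + EL (prefixWord (fun k => w (a + k)) b) := by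
  rw [prefixWord_add, EL_append]

lemma HasSafeSuffix.of_shift {w : ℕ → I} {m : ℕ} (h : HasSafeSuffix fun k => w (m + k)) :
    HasSafeSuffix w := by
  obtain ⟨n, hn⟩ := h
  exact ⟨m + n, by simpa only [add_assoc] using hn⟩

lemma safe_shift_of_forall_EL_prefixWord_le {w : ℕ → I} {n₀ : ℕ}
    (h : ∀ n, EL (prefixWord w n₀) ≤ EL (prefixWord w n)) : Safe fun k => w (n₀ + k) := by
  intro m
  have := EL_prefixWord_add w n₀ (m + 1)
  have := h (n₀ + (m + 1))
  linarith

namespace Function.Periodic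

variable {w : ℕ → I} {p : ℕ}

lemma EL_prefixWord_mul_add (hw : Periodic w p) (q r : ℕ) :
    EL (prefixWord w (p * q + r)) = q * EL (prefixWord w p) + EL (prefixWord w r) := by
  have hshift : (fun k => w (p + k)) = w := funext fun k => by rw [add_comm, hw]
  induction q with
  | zero => simp
  | succ q ih =>
    rw [show p * (q + 1) + r = p + (p * q + r) by ring, EL_prefixWord_add, hshift, ih]
    push_cast
    ring

lemma EL_prefixWord_mod_le (hw : Periodic w p) (hS : 0 ≤ EL (prefixWord w p)) (n : ℕ) :
    EL (prefixWord w (n % p)) ≤ EL (prefixWord w n) := by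
  conv_rhs => rw [← Nat.div_add_mod n p, hw.EL_prefixWord_mul_add]
  have : (0 : ℤ) ≤ (n / p : ℕ) * EL (prefixWord w p) := by positivity
  linarith

lemma hasSafeSuffix (hw : Periodic w p) (hp : 0 < p) (hS : 0 ≤ EL (prefixWord w p)) :
    HasSafeSuffix w := by
  obtain ⟨n₀, -, hmin⟩ := (Finset.range p).exists_min_image (fun m => EL (prefixWord w m))
    (Finset.nonempty_range_iff.mpr hp.ne')
  exact ⟨n₀, safe_shift_of_forall_EL_prefixWord_le fun n =>
    (hmin _ (Finset.mem_range.mpr (Nat.mod_lt n hp))).trans (hw.EL_prefixWord_mod_le hS n)⟩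

end Function.Periodic

lemma periodic_getD_mod {α : Type*} (v : List α) (d : α) :
    Periodic (fun k => v.getD (k % v.length) d) v.length := fun k => by
  simp only [Nat.add_mod_right]

lemma prefixWord_comp_getD_mod {α : Type*} (v : List α) (d : α) (f : α → I) :
    prefixWord (f ∘ fun k => v.getD (k % v.length) d) v.length = v.map f := by
  apply List.ext_getElem
  · simp [prefixWord]
  · intro i hi _
    simp only [prefixWord, List.length_map, List.length_range] at hi
    simp [prefixWord, Nat.mod_eq_of_lt hi, hi]

lemma upvw_length_add (u v : List (I × I)) (k : ℕ) :
    upvw u v (u.length + k) = v.getD (k % v.length) default := by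
  simp [upvw]

lemma hasSafeSuffix_upvw_comp (u : List (I × I)) {v : List (I × I)} (hv : v ≠ [])
    (f : I × I → I) (hf : 0 ≤ EL (v.map f)) : HasSafeSuffix fun n => f (upvw u v n) := by
  refine HasSafeSuffix.of_shift (m := u.length) ?_
  simp only [upvw_length_add]
  exact ((periodic_getD_mod v default).comp f).hasSafeSuffix (List.length_pos_iff.mpr hv)
    (by rwa [prefixWord_comp_getD_mod])

lemma EL_map_fst_of_plusMinus {v : List (I × I)}
    (hv : ∀ a ∈ v, a = (I.minus, I.plus) ∨ a = (I.plus, I.minus)) :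
    EL (v.map Prod.fst) = v.count (I.plus, I.minus) - v.count (I.minus, I.plus) := by
  induction v with
  | nil => rfl
  | cons a t ih =>
    have ih := ih fun b hb => hv b (List.mem_cons_of_mem a hb)
    rcases hv a List.mem_cons_self with rfl | rfl <;>
      simp [EL, lv] at ih ⊢ <;> omega

lemma EL_map_snd_of_plusMinus {v : List (I × I)}
    (hv : ∀ a ∈ v, a = (I.minus, I.plus) ∨ a = (I.plus, I.minus)) :
    EL (v.map Prod.snd) = v.count (I.minus, I.plus) - v.count (I.plus, I.minus) := by
  induction v with
  | nil => rfl
  | cons a t ih =>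
    have ih := ih fun b hb => hv b (List.mem_cons_of_mem a hb)
    rcases hv a List.mem_cons_self with rfl | rfl <;>
      simp [EL, lv] at ih ⊢ <;> omega

theorem ultimately_periodic_pm_word_in_Lss_cases (v : List (I × I)) (hv : v ≠ [])
    (hletters : ∀ a ∈ v, a = (I.minus, I.plus) ∨ a = (I.plus, I.minus))
    (u : List (I × I)) :
    (HasSafeSuffix (fun n => (upvw u v n).1) ∨ HasSafeSuffix (fun n => (upvw u v n).2)) ∧
    (v.count (I.minus, I.plus) < v.count (I.plus, I.minus) →
      HasSafeSuffix (fun n => (upvw u v n).1)) ∧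
    (v.count (I.plus, I.minus) < v.count (I.minus, I.plus) →
      HasSafeSuffix (fun n => (upvw u v n).2)) ∧
    (v.count (I.plus, I.minus) = v.count (I.minus, I.plus) →
      HasSafeSuffix (fun n => (upvw u v n).1) ∧ HasSafeSuffix (fun n => (upvw u v n).2)) := by
  have hfst : v.count (I.minus, I.plus) ≤ v.count (I.plus, I.minus) →
      HasSafeSuffix (fun n => (upvw u v n).1) := fun h =>
    hasSafeSuffix_upvw_comp u hv Prod.fst (by rw [EL_map_fst_of_plusMinus hletters]; omega)
  have hsnd : v.count (I.plus, I.minus) ≤ v.count (I.minus, I.plus) →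
      HasSafeSuffix (fun n => (upvw u v n).2) := fun h =>
    hasSafeSuffix_upvw_comp u hv Prod.snd (by rw [EL_map_snd_of_plusMinus hletters]; omega)
  exact ⟨(le_total _ _).imp hfst hsnd, fun h => hfst h.le, fun h => hsnd h.le,
    fun h => ⟨hfst h.ge, hsnd h.le⟩⟩
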